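/- arXiv:2002.06232 — 13 statements merged into one kernel-verified Lean document; each statement's English description precedes it below -/
import Mathlib

section
/- For a topological group X, the following are equivalent: (1) X is separable; (2) there exists a countable set S ⊆ X such that X = S·U for every neighborhood U of the identity; (3) there exists a countable set S ⊆ X such that X = U·S for every neighborhood U of the identity. -/
/-! A set `S` is dense iff it meets every neighbourhood `U⁻¹ x` of every point `x`, i.e. iff
`U * S = univ` for every neighbourhood `U` of `1`; inverting everything turns this into
`S * U = univ`. Countable such sets are then exactly the witnesses of separability. -/

open Pointwise Topology Set

section

variable {G : Type*} [TopologicalSpace G] [InvolutiveInv G] [ContinuousInv G] {S : Set G}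

theorem Dense.inv (hS : Dense S) : Dense S⁻¹ := by
  simpa only [inv_preimage] using hS.preimage (isOpenMap_inv G)

theorem dense_inv_iff : Dense S⁻¹ ↔ Dense S :=
  ⟨fun h => inv_inv S ▸ h.inv, Dense.inv⟩

end

section

variable {G : Type*} [Group G] [TopologicalSpace G] [IsTopologicalGroup G] {S : Set G}

theorem Dense.nhds_one_mul_eq_univ (hS : Dense S) {U : Set G} (hU : U ∈ 𝓝 1) :
    U * S = univ := by
  have hV : U ∩ U⁻¹ ∈ 𝓝 (1 : G) := Filter.inter_mem hU (inv_mem_nhds_one G hU)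
  have hV_symm : ∀ x ∈ U ∩ U⁻¹, x⁻¹ ∈ U ∩ U⁻¹ := fun x hx => ⟨hx.2, by simpa using hx.1⟩
  refine eq_univ_of_univ_subset ?_
  calc univ = closure S := hS.closure_eq.symm
    _ ⊆ (U ∩ U⁻¹) * S := closure_subset_mul_left_of_mem_nhds_one_of_inv S hV hV_symm
    _ ⊆ U * S := mul_subset_mul_right inter_subset_left

theorem dense_of_forall_nhds_one_mul_eq_univ (h : ∀ U ∈ 𝓝 (1 : G), U * S = univ) :
    Dense S := by
  intro x
  refine mem_closure_iff_nhds_one.2 fun U hU => ?_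
  obtain ⟨u, hu, y, hy, rfl⟩ := mem_mul.1 (h U⁻¹ (inv_mem_nhds_one G hU) ▸ mem_univ x)
  exact ⟨y, hy, by simpa using hu⟩

theorem dense_iff_forall_nhds_one_mul_eq_univ :
    Dense S ↔ ∀ U ∈ 𝓝 (1 : G), U * S = univ :=
  ⟨fun hS _ hU => hS.nhds_one_mul_eq_univ hU, dense_of_forall_nhds_one_mul_eq_univ⟩

theorem dense_iff_forall_mul_nhds_one_eq_univ :
    Dense S ↔ ∀ U ∈ 𝓝 (1 : G), S * U = univ := by
  have inv_mul_inv_eq_univ (U : Set G) : U⁻¹ * S⁻¹ = univ ↔ S * U = univ := by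
    rw [← mul_inv_rev, inv_eq_iff_eq_inv, inv_univ]
  rw [← dense_inv_iff, dense_iff_forall_nhds_one_mul_eq_univ]
  refine ⟨fun h U hU => (inv_mul_inv_eq_univ U).1 (h _ (inv_mem_nhds_one G hU)), fun h U hU => ?_⟩
  simpa using (inv_mul_inv_eq_univ U⁻¹).2 (h _ (inv_mem_nhds_one G hU))

end

theorem stmt0 (X : Type*) [Group X] [TopologicalSpace X] [IsTopologicalGroup X] :
    List.TFAE
      [TopologicalSpace.SeparableSpace X,
       ∃ S : Set X, S.Countable ∧ ∀ U ∈ nhds (1 : X), S * U = Set.univ,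
       ∃ S : Set X, S.Countable ∧ ∀ U ∈ nhds (1 : X), U * S = Set.univ] := by
  rw [TopologicalSpace.separableSpace_iff]
  tfae_have 1 ↔ 2 := exists_congr fun _ => and_congr_right fun _ =>
    dense_iff_forall_mul_nhds_one_eq_univ
  tfae_have 1 ↔ 3 := exists_congr fun _ => and_congr_right fun _ =>
    dense_iff_forall_nhds_one_mul_eq_univ
  tfae_finish
end

section
/- If X is a separable topological group, then there exists a countable set S ⊆ X such that X = U·S·U for every neighborhood U of the identity. -/
open Pointwise Set Topology

/-! Any countable dense set `S` works, since already `U * S = X`: for open `V ∋ 1`,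
`V * S = V * closure S = X`. -/

theorem Dense.mul_eq_univ_of_mem_nhds_one {G : Type*} [Group G] [TopologicalSpace G]
    [IsTopologicalGroup G] {S U : Set G} (hS : Dense S) (hU : U ∈ 𝓝 (1 : G)) :
    U * S = univ := by
  obtain ⟨V, hVU, hVo, hV1⟩ := mem_nhds_iff.mp hU
  refine eq_univ_of_univ_subset ?_
  calc univ = V * closure S := by rw [hS.closure_eq, mul_univ ⟨1, hV1⟩]
    _ = V * S := hVo.mul_closure S
    _ ⊆ U * S := mul_subset_mul_right hVU

theorem stmt1 (X : Type*) [Group X] [TopologicalSpace X] [IsTopologicalGroup X]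
    [TopologicalSpace.SeparableSpace X] :
    ∃ S : Set X, S.Countable ∧ ∀ U ∈ nhds (1 : X), U * S * U = Set.univ := by
  obtain ⟨S, hSc, hSd⟩ := TopologicalSpace.exists_countable_dense X
  refine ⟨S, hSc, fun U hU => eq_univ_of_univ_subset ?_⟩
  rw [← hSd.mul_eq_univ_of_mem_nhds_one hU]
  exact subset_mul_left _ (mem_of_mem_nhds hU)
end

section
/- A compact topological group is duoseparable if and only if it is separable. -/
open Pointwise Filter Topology Set

/-
A dense set `D` satisfies `D * U = X` for every neighborhood `U` of `1`, so for any `s ∈ D`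
we get `D * U * D ⊇ D * U * {s} = X`. Conversely, in a compact group conjugation is uniformly
small: for each `U` there is `W ∈ 𝓝 1` with `t⁻¹ * W * t ⊆ U` for all `t`. Writing
`s * w * t = (s * t) * (t⁻¹ * w * t)` then shows `S * S * U = X` for every `U`, i.e. the
countable set `S * S` is dense.
-/

section IsTopologicalGroup

variable {G : Type*} [Group G] [TopologicalSpace G] [IsTopologicalGroup G]

theorem dense_iff_mul_nhds_one_eq_univ {D : Set G} :
    Dense D ↔ ∀ U ∈ 𝓝 (1 : G), D * U = univ := by
  constructor
  · intro hD U hU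
    have hsymm : U ∩ U⁻¹ ∈ 𝓝 (1 : G) := inter_mem hU (inv_mem_nhds_one G hU)
    refine eq_univ_of_univ_subset ?_
    calc univ = closure D := hD.closure_eq.symm
      _ ⊆ D * (U ∩ U⁻¹) :=
          closure_subset_mul_right_of_mem_nhds_one_of_inv D hsymm
            fun x hx => ⟨hx.2, by simpa using hx.1⟩
      _ ⊆ D * U := mul_subset_mul_left inter_subset_left
  · intro h
    refine dense_iff_closure_eq.2 (eq_univ_of_forall fun x => mem_closure_iff_nhds.2 fun N hN => ?_)
    have hW : (fun w => x * w⁻¹) ⁻¹' N ∈ 𝓝 (1 : G) :=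
      (continuous_const.mul continuous_inv).continuousAt.preimage_mem_nhds (by simpa using hN)
    obtain ⟨d, hd, w, hw, hdw⟩ : x ∈ D * _ := (h _ hW).symm ▸ mem_univ x
    exact ⟨d, by simpa [← hdw] using hw, hd⟩

theorem Dense.mul_mul_eq_univ {D : Set G} (hD : Dense D) {U : Set G} (hU : U ∈ 𝓝 (1 : G)) :
    D * U * D = univ := by
  obtain ⟨s, hs⟩ := hD.nonempty
  refine eq_univ_of_forall fun x => ?_
  have hxs : x * s⁻¹ ∈ D * U := (dense_iff_mul_nhds_one_eq_univ.1 hD U hU).symm ▸ mem_univ _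
  simpa using mul_mem_mul hxs hs

theorem IsCompact.eventually_forall_conj_mem {K : Set G} (hK : IsCompact K) {U : Set G}
    (hU : U ∈ 𝓝 (1 : G)) : ∀ᶠ v in 𝓝 (1 : G), ∀ g ∈ K, g⁻¹ * v * g ∈ U := by
  refine hK.eventually_forall_of_forall_eventually fun g _ => ?_
  have hconj : Tendsto (fun z : G × G => z.2⁻¹ * z.1 * z.2) (𝓝 (1, g)) (𝓝 1) := by
    simpa using (by fun_prop : Continuous fun z : G × G => z.2⁻¹ * z.1 * z.2).tendsto (1, g)
  exact hconj hU

theorem dense_mul_of_forall_mul_mul_eq_univ [CompactSpace G] {S T : Set G}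
    (h : ∀ U ∈ 𝓝 (1 : G), S * U * T = univ) : Dense (S * T) := by
  refine dense_iff_mul_nhds_one_eq_univ.2 fun U hU => eq_univ_of_forall fun x => ?_
  obtain ⟨W, hW, hWU⟩ := (isCompact_univ.eventually_forall_conj_mem hU).exists_mem
  obtain ⟨_, ⟨s, hs, w, hw, rfl⟩, t, ht, rfl⟩ : x ∈ S * W * T :=
    (h W hW).symm ▸ mem_univ x
  exact ⟨s * t, mul_mem_mul hs ht, t⁻¹ * w * t, hWU w hw t (mem_univ t), by group⟩

end IsTopologicalGroup

theorem stmt2 (X : Type*) [Group X] [TopologicalSpace X] [IsTopologicalGroup X]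
    [CompactSpace X] :
    (∃ S : Set X, S.Countable ∧ ∀ U ∈ nhds (1 : X), S * U * S = Set.univ) ↔
      TopologicalSpace.SeparableSpace X := by
  constructor
  · rintro ⟨S, hS, hSU⟩
    exact ⟨S * S, by simpa only [← image2_mul] using hS.image2 hS _,
      dense_mul_of_forall_mul_mul_eq_univ hSU⟩
  · rintro ⟨D, hD, hDense⟩
    exact ⟨D, hD, fun U hU => hDense.mul_mul_eq_univ hU⟩
end

section
/- Every duoseparable locally compact topological group is σ-compact. -/
open Pointwise

section

variable {X : Type*} [Mul X] [TopologicalSpace X] [ContinuousMul X] {S T : Set X}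

theorem IsSigmaCompact.countable_mul (hS : S.Countable) (hT : IsSigmaCompact T) :
    IsSigmaCompact (S * T) := by
  rw [← Set.iUnion_mul_left_image]
  exact isSigmaCompact_biUnion hS fun a _ => hT.image (continuous_const_mul a)

theorem IsSigmaCompact.mul_countable (hT : IsSigmaCompact T) (hS : S.Countable) :
    IsSigmaCompact (T * S) := by
  rw [← Set.iUnion_mul_right_image]
  exact isSigmaCompact_biUnion hS fun b _ => hT.image (continuous_mul_const b)

end

theorem stmt3 (X : Type*) [Group X] [TopologicalSpace X] [IsTopologicalGroup X]
    [LocallyCompactSpace X]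
    (h : ∃ S : Set X, S.Countable ∧ ∀ U ∈ nhds (1 : X), S * U * S = Set.univ) :
    SigmaCompactSpace X := by
  obtain ⟨S, hS, hSUS⟩ := h
  obtain ⟨K, hK, hK_nhds⟩ := exists_compact_mem_nhds (1 : X)
  rw [← isSigmaCompact_univ_iff, ← hSUS K hK_nhds]
  exact (hK.isSigmaCompact.countable_mul hS).mul_countable hS
end

section
/- Let X be a topological group and H a countable subgroup of the automorphism group of X (automorphisms being group isomorphisms that are homeomorphisms) such that for every neighborhood U of the identity, X = ⋃_{h ∈ H} h(U). Then the semidirect product X ⋊ H (with H discrete) is duoseparable. -/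
/-! Take `S` to be the copy of `H` in `X ⋊ H`. A neighbourhood `U` of the identity contains
`V × {1}` for a neighbourhood `V` of `1` in `X`, and by hypothesis every `x ∈ X` is `h v` with
`h ∈ H`, `v ∈ V`; then `(x, g) = (1, h) · (v, 1) · (1, h⁻¹ g) ∈ S U S`. -/

open Pointwise Set

namespace SemidirectProduct

variable {N G : Type*} [Group N] [Group G] {φ : G →* MulAut N}

theorem mk_aut_eq_inr_mul_inl_mul_inr (n : N) (g h : G) :
    (⟨φ h n, g⟩ : N ⋊[φ] G) = inr h * inl n * inr (h⁻¹ * g) := by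
  rw [mk_eq_inl_mul_inr, inl_aut, map_mul, mul_assoc]

theorem range_inr_mul_mul_range_inr_eq_univ {U : Set (N ⋊[φ] G)}
    (hU : ⋃ h, φ h '' (inl ⁻¹' U) = univ) :
    range inr * U * range inr = univ := by
  refine eq_univ_of_forall fun ⟨x, g⟩ ↦ ?_
  obtain ⟨h, n, hn, rfl⟩ := mem_iUnion.1 (hU ▸ mem_univ x)
  rw [mk_aut_eq_inr_mul_inl_mul_inr n g h]
  exact mul_mem_mul (mul_mem_mul (mem_range_self h) hn) (mem_range_self _)

theorem preimage_inl_mem_nhds_one [TopologicalSpace N] [TopologicalSpace G]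
    {U : Set (N ⋊[φ] G)}
    (hU : U ∈ @nhds _ (.induced (fun p : N ⋊[φ] G ↦ (p.left, p.right)) inferInstance) 1) :
    inl ⁻¹' U ∈ nhds (1 : N) := by
  let : TopologicalSpace (N ⋊[φ] G) := .induced (fun p ↦ (p.left, p.right)) inferInstance
  have hinl : Continuous (inl : N →* N ⋊[φ] G) :=
    continuous_induced_rng.2 (continuous_id.prodMk continuous_const)
  exact hinl.continuousAt.preimage_mem_nhds (by rwa [map_one])

end SemidirectProduct

theorem stmt4_general (X : Type*) [Group X] [TopologicalSpace X]
    (H : Subgroup (MulAut X)) (hcount : (H : Set (MulAut X)).Countable)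
    (habs : ∀ U ∈ nhds (1 : X), (⋃ h ∈ H, ⇑h '' U) = Set.univ) :
    ∃ S : Set (X ⋊[H.subtype] H), S.Countable ∧
      ∀ U ∈ @nhds _ (TopologicalSpace.induced
          (fun p : X ⋊[H.subtype] H => (p.left, p.right))
          (@instTopologicalSpaceProd X H _ ⊥)) 1,
        S * U * S = Set.univ := by
  let : TopologicalSpace H := ⊥
  have : Countable H := hcount.to_subtype
  refine ⟨range SemidirectProduct.inr, countable_range _,
    fun U hU ↦ SemidirectProduct.range_inr_mul_mul_range_inr_eq_univ ?_⟩
  rw [← habs _ (SemidirectProduct.preimage_inl_mem_nhds_one hU)]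
  exact iUnion_subtype (· ∈ H) _

theorem stmt4 (X : Type*) [Group X] [TopologicalSpace X] [IsTopologicalGroup X]
    (H : Subgroup (MulAut X)) (hcount : (H : Set (MulAut X)).Countable)
    (hcont : ∀ h ∈ H, Continuous ⇑h)
    (habs : ∀ U ∈ nhds (1 : X), (⋃ h ∈ H, ⇑h '' U) = Set.univ) :
    ∃ S : Set (X ⋊[H.subtype] H), S.Countable ∧
      ∀ U ∈ @nhds _ (TopologicalSpace.induced
          (fun p : X ⋊[H.subtype] H => (p.left, p.right))
          (@instTopologicalSpaceProd X H _ ⊥)) 1,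
        S * U * S = Set.univ :=
  stmt4_general X H hcount habs
end

section
/- For every finite set F ⊆ 𝕋^ω and every neighborhood U of zero in 𝕋^ω, there exists a topological group automorphism α of 𝕋^ω such that α(F) ⊆ U. -/
/-!
For a finite `F ⊆ M^ℕ` with `M` a compact abelian group, the coordinate sequence
`j ↦ (x j)_{x ∈ F}` lives in the compact group `M^F`, so for every `k` there are indices
`k < p < q` with `x p - x q` small for all `x ∈ F` simultaneously. The automorphism writing
`x p - x q` into coordinate `k` and moving `x k` to coordinate `p` makes coordinate `k` small
without touching the earlier ones. Composing `n` such automorphisms makes the first `n`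
coordinates of every point of `F` small, and that is all a basic neighbourhood of zero asks.
-/

open Filter Topology Function

namespace ContinuousAddEquiv

variable {ι M : Type*} [DecidableEq ι] [AddCommGroup M] [TopologicalSpace M]
  [IsTopologicalAddGroup M]

def piSwapSub {i p q : ι} (hip : i ≠ p) (hiq : i ≠ q) (hpq : p ≠ q) :
    (ι → M) ≃ₜ+ (ι → M) where
  toFun y := update (update y i (y p - y q)) p (y i)
  invFun z := update (update z p (z i + z q)) i (z p)
  left_inv y := by
    ext j
    simp only [update_apply]
    split_ifs <;> simp_all
  right_inv z := by
    ext j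
    simp only [update_apply]
    split_ifs <;> simp_all
  map_add' y z := by
    ext j
    simp only [update_apply, Pi.add_apply]
    split_ifs <;> abel
  continuous_toFun := by fun_prop
  continuous_invFun := by fun_prop

variable {i p q : ι} (hip : i ≠ p) (hiq : i ≠ q) (hpq : p ≠ q)

@[simp]
theorem piSwapSub_apply_self (y : ι → M) : piSwapSub hip hiq hpq y i = y p - y q := by
  simp [piSwapSub, hip]

theorem piSwapSub_apply_of_ne (y : ι → M) {j : ι} (hji : j ≠ i) (hjp : j ≠ p) :
    piSwapSub hip hiq hpq y j = y j := by
  simp [piSwapSub, hji, hjp]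

end ContinuousAddEquiv

theorem exists_lt_lt_sub_mem_of_compactSpace {G : Type*} [AddCommGroup G] [TopologicalSpace G]
    [IsTopologicalAddGroup G] [CompactSpace G] (u : ℕ → G) {W : Set G} (hW : W ∈ 𝓝 0)
    (k : ℕ) : ∃ p q, k < p ∧ p < q ∧ u p - u q ∈ W := by
  obtain ⟨w, hw⟩ := exists_clusterPt_of_compactSpace (map u atTop)
  have hsub : (fun y : G × G => y.1 - y.2) ⁻¹' W ∈ 𝓝 w ×ˢ 𝓝 w := by
    rw [← nhds_prod_eq]
    exact continuous_sub.continuousAt.preimage_mem_nhds (by rwa [sub_self])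
  obtain ⟨V, hV, hVW⟩ := mem_prod_self_iff.1 hsub
  have hfreq : ∀ m, ∃ j > m, u j ∈ V := fun m =>
    frequently_atTop'.1 (frequently_map.1 (hw.frequently hV)) m
  obtain ⟨p, hkp, hp⟩ := hfreq k
  obtain ⟨q, hpq, hq⟩ := hfreq p
  exact ⟨p, q, hkp, hpq, @hVW (u p, u q) ⟨hp, hq⟩⟩

section

variable {M : Type*} [AddCommGroup M] [TopologicalSpace M] [IsTopologicalAddGroup M]
  [CompactSpace M]

theorem exists_lt_lt_forall_sub_mem {F : Set (ℕ → M)} (hF : F.Finite) {V : Set M}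
    (hV : V ∈ 𝓝 0) (k : ℕ) : ∃ p q, k < p ∧ p < q ∧ ∀ x ∈ F, x p - x q ∈ V := by
  have : Finite F := hF
  have hW : Set.univ.pi (fun _ : F => V) ∈ 𝓝 0 :=
    set_pi_mem_nhds Set.finite_univ fun _ _ => hV
  obtain ⟨p, q, hkp, hpq, hmem⟩ :=
    exists_lt_lt_sub_mem_of_compactSpace (fun j (x : F) => x.1 j) hW k
  exact ⟨p, q, hkp, hpq, fun x hx => hmem ⟨x, hx⟩ trivial⟩

theorem exists_continuousAddEquiv_forall_lt_mem {F : Set (ℕ → M)} (hF : F.Finite)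
    {V : ℕ → Set M} (hV : ∀ i, V i ∈ 𝓝 0) (k : ℕ) :
    ∃ α : (ℕ → M) ≃ₜ+ (ℕ → M), ∀ x ∈ F, ∀ i < k, α x i ∈ V i := by
  induction k with
  | zero => exact ⟨.refl _, by simp⟩
  | succ k ih =>
    obtain ⟨α, hα⟩ := ih
    obtain ⟨p, q, hkp, hpq, hsub⟩ := exists_lt_lt_forall_sub_mem (hF.image α) (hV k) k
    refine ⟨α.trans (.piSwapSub hkp.ne (hkp.trans hpq).ne hpq.ne), fun x hx i hi => ?_⟩
    rcases Nat.lt_succ_iff_lt_or_eq.1 hi with hik | rfl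
    · rw [ContinuousAddEquiv.trans_apply,
        ContinuousAddEquiv.piSwapSub_apply_of_ne _ _ _ _ hik.ne (hik.trans hkp).ne]
      exact hα x hx i hik
    · simpa using hsub _ (Set.mem_image_of_mem α hx)

theorem exists_continuousAddEquiv_image_subset {F : Set (ℕ → M)} (hF : F.Finite)
    {U : Set (ℕ → M)} (hU : U ∈ 𝓝 0) : ∃ α : (ℕ → M) ≃ₜ+ (ℕ → M), α '' F ⊆ U := by
  rw [nhds_pi, mem_pi] at hU
  obtain ⟨I, hI, V, hV, hVU⟩ := hU
  obtain ⟨n, hn⟩ := hI.bddAbove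
  obtain ⟨α, hα⟩ := exists_continuousAddEquiv_forall_lt_mem hF hV (n + 1)
  refine ⟨α, ?_⟩
  rintro _ ⟨x, hx, rfl⟩
  exact hVU fun i hi => hα x hx i (Nat.lt_succ_of_le (hn hi))

end

theorem stmt8 (F : Set (ℕ → AddCircle (1 : ℝ))) (hF : F.Finite)
    (U : Set (ℕ → AddCircle (1 : ℝ))) (hU : U ∈ nhds 0) :
    ∃ α : AddAut (ℕ → AddCircle (1 : ℝ)),
      Continuous ⇑α ∧ Continuous ⇑α.symm ∧ ⇑α '' F ⊆ U := by
  have : Fact ((0 : ℝ) < 1) := ⟨one_pos⟩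
  obtain ⟨α, hα⟩ := exists_continuousAddEquiv_image_subset hF hU
  exact ⟨α.toAddEquiv, α.continuous, α.symm.continuous, hα⟩
end

section
/- There exists a countable set A of topological group automorphisms of 𝕋^ω such that for every finite set F ⊆ 𝕋^ω and every neighborhood U of zero, there exists α ∈ A with F ⊆ α(U). -/
/-!
Take for `A` the group generated by the coordinate swaps and the transvections
`x ↦ x - x b • e a` of `𝕋^ℕ`: it is countable and consists of homeomorphisms. A neighbourhood of `0`
constrains only finitely many coordinates, so it suffices to find `β ∈ A` making those coordinates
of `β x` small for every `x ∈ F`, and then `α = β⁻¹`. This is done one coordinate `i` at a time: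
`𝕋^F` is compact, so among the infinitely many columns `(x j)_{x ∈ F}` with `j` outside the
coordinates treated so far two, with indices `a ≠ b`, are close; the transvection replacing `x a`
by `x a - x b`, followed by the swap of `a` and `i`, makes coordinate `i` small and leaves the
other treated coordinates alone.
-/

open Filter Topology

theorem AddSubgroup.countable_closure {G : Type*} [AddGroup G] {S : Set G} (hS : S.Countable) :
    (AddSubgroup.closure S : Set G).Countable := by
  have := hS.to_subtype
  rw [← Subtype.range_coe (s := S), ← FreeAddGroup.range_lift_eq_closure, AddMonoidHom.coe_range]
  exact Set.countable_range _

def continuousAddAut (M : Type*) [Add M] [TopologicalSpace M] : AddSubgroup (AddAut M) where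
  carrier := {α | Continuous α ∧ Continuous α.symm}
  zero_mem' := ⟨continuous_id, continuous_id⟩
  add_mem' hα hβ := ⟨hα.1.comp hβ.1, hβ.2.comp hα.2⟩
  neg_mem' h := ⟨h.2, h.1⟩

theorem exists_ne_sub_mem_of_compactSpace {K ι : Type*} [TopologicalSpace K] [AddGroup K]
    [IsTopologicalAddGroup K] [CompactSpace K] [Infinite ι] (c : ι → K) {W : Set K}
    (hW : W ∈ 𝓝 0) : ∃ m n, m ≠ n ∧ c m - c n ∈ W := by
  obtain ⟨x, -, hx⟩ := isCompact_univ.exists_mapClusterPt (f := cofinite) (u := c) (by simp)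
  have hsub : Tendsto (fun p : K × K => p.1 - p.2) (𝓝 x ×ˢ 𝓝 x) (𝓝 0) := by
    simpa [nhds_prod_eq] using continuous_sub.tendsto (x, x)
  obtain ⟨N, hN, hNW⟩ := mem_prod_self_iff.1 (hsub hW)
  obtain ⟨m, hm, n, hn, hmn⟩ := (frequently_cofinite_iff_infinite.1 (hx.frequently hN)).nontrivial
  exact ⟨m, n, hmn, hNW (Set.mk_mem_prod hm hn)⟩

namespace AddAut

variable {ι M : Type*} [DecidableEq ι]

def piTransvection [AddCommGroup M] (a b : ι) (h : a ≠ b) : AddAut (ι → M) where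
  toFun x := Function.update x a (x a - x b)
  invFun x := Function.update x a (x a + x b)
  left_inv x := by ext k; by_cases hk : k = a <;> simp [hk, h.symm]
  right_inv x := by ext k; by_cases hk : k = a <;> simp [hk, h.symm]
  map_add' x y := by ext k; by_cases hk : k = a <;> simp [hk]; abel

variable (ι M) in
def piElementary [AddCommGroup M] : Set (AddAut (ι → M)) :=
  Set.range (fun p : ι × ι => AddEquiv.arrowCongr (Equiv.swap p.1 p.2) (AddEquiv.refl M)) ∪
    Set.range (fun p : {p : ι × ι // p.1 ≠ p.2} => piTransvection p.1.1 p.1.2 p.2)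

theorem countable_piElementary [Countable ι] [AddCommGroup M] :
    (piElementary ι M).Countable :=
  (Set.countable_range _).union (Set.countable_range _)

theorem piElementary_subset_continuousAddAut [AddCommGroup M] [TopologicalSpace M]
    [IsTopologicalAddGroup M] : piElementary ι M ⊆ continuousAddAut (ι → M) := by
  rintro _ (⟨⟨i, j⟩, rfl⟩ | ⟨⟨⟨a, b⟩, h⟩, rfl⟩)
  · exact ⟨continuous_pi fun _ => continuous_apply _, continuous_pi fun _ => continuous_apply _⟩
  · exact ⟨continuous_id.update a ((continuous_apply a).sub (continuous_apply b)),
      continuous_id.update a ((continuous_apply a).add (continuous_apply b))⟩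

variable [AddCommGroup M] [TopologicalSpace M] [IsTopologicalAddGroup M] [CompactSpace M]
  [Infinite ι]

theorem exists_mem_closure_piElementary_apply_mem {F : Set (ι → M)} (hF : F.Finite)
    {I : Set ι} (hI : I.Finite) (i : ι) {V : Set M} (hV : V ∈ 𝓝 0) :
    ∃ γ ∈ AddSubgroup.closure (piElementary ι M),
      ∀ x ∈ F, γ x i ∈ V ∧ ∀ k ∈ I, k ≠ i → γ x k = x k := by
  have := hF.to_subtype
  have := ((hI.insert i).infinite_compl).to_subtype
  obtain ⟨⟨a, ha⟩, ⟨b, hb⟩, hab, hV'⟩ := exists_ne_sub_mem_of_compactSpace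
    (fun j : ↥(insert i I)ᶜ => fun x : F => x.1 j)
    (set_pi_mem_nhds (s := fun _ => V) Set.finite_univ fun _ _ => hV)
  simp only [Set.mem_compl_iff, Set.mem_insert_iff, not_or] at ha hb
  replace hab : a ≠ b := fun h => hab (Subtype.ext h)
  let σ : AddAut (ι → M) := AddEquiv.arrowCongr (Equiv.swap i a) (AddEquiv.refl M)
  let τ : AddAut (ι → M) := piTransvection a b hab
  have hσ : σ ∈ piElementary ι M := Or.inl ⟨(i, a), rfl⟩
  have hτ : τ ∈ piElementary ι M := Or.inr ⟨⟨(a, b), hab⟩, rfl⟩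
  refine ⟨σ + τ, add_mem (AddSubgroup.subset_closure hσ) (AddSubgroup.subset_closure hτ),
    fun x hx => ⟨?_, fun k hk hki => ?_⟩⟩
  · show Function.update x a (x a - x b) (Equiv.swap i a i) ∈ V
    rw [Equiv.swap_apply_left, Function.update_self]
    exact hV' ⟨x, hx⟩ (Set.mem_univ _)
  · have hka : k ≠ a := fun h => ha.2 (h ▸ hk)
    show Function.update x a (x a - x b) (Equiv.swap i a k) = x k
    rw [Equiv.swap_apply_of_ne_of_ne hki hka, Function.update_of_ne hka]

theorem exists_mem_closure_piElementary_forall_apply_mem {F : Set (ι → M)} (hF : F.Finite)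
    (I : Finset ι) {V : ι → Set M} (hV : ∀ i, V i ∈ 𝓝 0) :
    ∃ β ∈ AddSubgroup.closure (piElementary ι M), ∀ x ∈ F, ∀ i ∈ I, β x i ∈ V i := by
  induction I using Finset.induction_on with
  | empty => exact ⟨0, zero_mem _, by simp⟩
  | insert i I hi ih =>
    obtain ⟨β, hβ, hβF⟩ := ih
    obtain ⟨γ, hγ, hγF⟩ :=
      exists_mem_closure_piElementary_apply_mem (hF.image β) I.finite_toSet i (hV i)
    refine ⟨γ + β, add_mem hγ hβ, fun x hx k hk => ?_⟩
    obtain ⟨hγi, hγI⟩ := hγF (β x) ⟨x, hx, rfl⟩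
    rw [add_apply]
    rcases Finset.mem_insert.1 hk with rfl | hk
    · exact hγi
    · rw [hγI k hk fun h => hi (h ▸ hk)]
      exact hβF x hx k hk

end AddAut

open AddAut in
theorem stmt9 :
    ∃ A : Set (AddAut (ℕ → AddCircle (1 : ℝ))), A.Countable ∧
      (∀ α ∈ A, Continuous ⇑α ∧ Continuous ⇑α.symm) ∧
      ∀ F : Set (ℕ → AddCircle (1 : ℝ)), F.Finite →
        ∀ U ∈ nhds (0 : ℕ → AddCircle (1 : ℝ)), ∃ α ∈ A, F ⊆ ⇑α '' U := by
  refine ⟨AddSubgroup.closure (piElementary ℕ (AddCircle (1 : ℝ))),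
    AddSubgroup.countable_closure countable_piElementary,
    fun α hα => (AddSubgroup.closure_le _).2 piElementary_subset_continuousAddAut hα,
    fun F hF U hU => ?_⟩
  rw [nhds_pi, mem_pi'] at hU
  obtain ⟨I, V, hV, hVU⟩ := hU
  obtain ⟨β, hβ, hβF⟩ := exists_mem_closure_piElementary_forall_apply_mem hF I hV
  exact ⟨-β, neg_mem hβ, fun x hx => ⟨β x, hVU (hβF x hx), by simp [AddAut.neg_def]⟩⟩
end

section
/- For any infinite cardinal κ, the automorphism group of the compact topological group 𝕋^κ contains a countable subgroup H such that for every neighborhood U of zero, 𝕋^κ = ⋃_{h ∈ H} h(U). -/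
/-!
Choosing `ι ≃ ℕ × ι` identifies `𝕋^ι` with `G^ℕ` for the compact abelian group `G = 𝕋^ι`, so it
suffices to find a countable absorbing group of automorphisms of `G^ℕ`. A neighbourhood of `0` in
`G^ℕ` contains a box `{x | ∀ n < K, x n ∈ V}`. Split the coordinates `≥ K` into countably many
disjoint copies of `{0, …, K - 1}`, indexed by `s`, and let `y_s` be the restriction of `z` to the
`s`-th copy. By compactness two of them satisfy `y_s - y_t ∈ box`, and the automorphism that swaps
`{0, …, K - 1}` with copy `s` and then subtracts copy `t` from it maps `z` into the box. These
automorphisms, indexed by `(K, s, t)`, generate a countable group.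
-/

open Filter Topology Set

section Absorbing

variable (M : Type*) [AddGroup M] [TopologicalSpace M]

def continuousAddAuts : AddSubgroup (AddAut M) where
  carrier := {h | Continuous h ∧ Continuous h.symm}
  zero_mem' := ⟨continuous_id, continuous_id⟩
  add_mem' hf hg := ⟨hf.1.comp hg.1, hg.2.comp hf.2⟩
  neg_mem' hf := ⟨hf.2, hf.1⟩

variable {M}

def AddSubgroup.IsAbsorbing (H : AddSubgroup (AddAut M)) : Prop :=
  ∀ U ∈ 𝓝 (0 : M), ⋃ h ∈ H, h '' U = univ

theorem AddSubgroup.isAbsorbing_iff {H : AddSubgroup (AddAut M)} :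
    H.IsAbsorbing ↔ ∀ U ∈ 𝓝 (0 : M), ∀ z, ∃ h ∈ H, h z ∈ U := by
  refine forall₂_congr fun U _ => ?_
  simp only [eq_univ_iff_forall, mem_iUnion₂, mem_image]
  refine forall_congr' fun z => ⟨fun ⟨h, hH, u, hu, huz⟩ => ⟨-h, neg_mem hH, ?_⟩,
    fun ⟨h, hH, hz⟩ => ⟨-h, neg_mem hH, h z, hz, ?_⟩⟩
  · simpa [← huz] using hu
  · simp

variable {N : Type*} [AddGroup N] [TopologicalSpace N] (ψ : M ≃ₜ+ N)

theorem AddSubgroup.IsAbsorbing.map_congr {H : AddSubgroup (AddAut M)} (hH : H.IsAbsorbing) :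
    (H.map (AddAut.congr ψ.toAddEquiv).toAddMonoidHom).IsAbsorbing := by
  rw [isAbsorbing_iff] at hH ⊢
  intro U hU z
  have hU' : ψ ⁻¹' U ∈ 𝓝 (0 : M) :=
    ψ.continuous.continuousAt.preimage_mem_nhds (by simpa using hU)
  obtain ⟨h, hH, hz⟩ := hH _ hU' (ψ.symm z)
  exact ⟨_, mem_map_of_mem _ hH, hz⟩

theorem map_congr_continuousAddAuts_le :
    (continuousAddAuts M).map (AddAut.congr ψ.toAddEquiv).toAddMonoidHom ≤
      continuousAddAuts N := by
  rintro _ ⟨h, ⟨hc, hc'⟩, rfl⟩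
  exact ⟨ψ.continuous.comp (hc.comp ψ.symm.continuous),
    ψ.continuous.comp (hc'.comp ψ.symm.continuous)⟩

end Absorbing

def ContinuousAddEquiv.piCurryOfEquiv {α β γ : Type*} (e : α ≃ β × γ) (G : Type*) [Add G]
    [TopologicalSpace G] : (α → G) ≃ₜ+ (β → γ → G) where
  toFun x b c := x (e.symm (b, c))
  invFun y a := y (e a).1 (e a).2
  left_inv x := by simp
  right_inv y := by simp
  map_add' _ _ := rfl
  continuous_toFun := by fun_prop
  continuous_invFun := by fun_prop

theorem Set.Countable.addSubgroupClosure {G : Type*} [AddGroup G] {s : Set G} (hs : s.Countable) :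
    (AddSubgroup.closure s : Set G).Countable := by
  have := hs.to_subtype
  rw [← Subtype.range_coe (s := s), ← FreeAddGroup.range_lift_eq_closure]
  exact countable_range _

theorem exists_ne_sub_mem_of_compactSpace_s10 {G : Type*} [AddGroup G] [TopologicalSpace G]
    [ContinuousSub G] [CompactSpace G] (y : ℕ → G) {V : Set G} (hV : V ∈ 𝓝 0) :
    ∃ s t, s ≠ t ∧ y s - y t ∈ V := by
  obtain ⟨a, -, ha⟩ := isCompact_univ.exists_clusterPt (f := map y atTop) (by simp)
  have hsub : ∀ᶠ p in 𝓝 a ×ˢ 𝓝 a, p.1 - p.2 ∈ V := by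
    rw [← nhds_prod_eq]
    exact (continuous_fst.sub continuous_snd).continuousAt.preimage_mem_nhds (by simpa using hV)
  obtain ⟨W, hW, hWV⟩ := (eventually_prod_self_iff (r := fun p q => p - q ∈ V)).mp hsub
  have hfreq := frequently_atTop.mp (mapClusterPt_iff_frequently.mp ha W hW)
  obtain ⟨s, -, hs⟩ := hfreq 0
  obtain ⟨t, hst, ht⟩ := hfreq (s + 1)
  exact ⟨s, t, by omega, hWV _ hs _ ht⟩

theorem exists_pi_Iio_subset_of_mem_nhds {X : Type*} [TopologicalSpace X] {x : X}
    {U : Set (ℕ → X)} (hU : U ∈ 𝓝 fun _ => x) : ∃ K, ∃ V ∈ 𝓝 x, (Iio K).pi (fun _ => V) ⊆ U := by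
  rw [nhds_pi, Filter.mem_pi] at hU
  obtain ⟨I, hI, t, ht, htU⟩ := hU
  obtain ⟨K, hK⟩ := hI.bddAbove
  refine ⟨K + 1, ⋂ i ∈ I, t i, (biInter_mem hI).2 fun i _ => ht i, fun y hy => htU fun i hi => ?_⟩
  exact mem_iInter₂.mp (hy i (Nat.lt_succ_of_le (hK hi))) i hi

def AddAut.oneSub {M : Type*} [AddCommGroup M] (L : M →+ M) (hL : ∀ x, L (L x) = 0) :
    AddAut M where
  toFun x := x - L x
  invFun x := x + L x
  left_inv x := by simp [hL]
  right_inv x := by simp [hL]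
  map_add' x y := by simp only [map_add]; abel

theorem AddAut.oneSub_apply {M : Type*} [AddCommGroup M] (L : M →+ M) (hL : ∀ x, L (L x) = 0)
    (x : M) : oneSub L hL x = x - L x := rfl

theorem AddAut.oneSub_mem_continuousAddAuts {M : Type*} [AddCommGroup M] [TopologicalSpace M]
    [IsTopologicalAddGroup M] {L : M →+ M} (hL : ∀ x, L (L x) = 0) (hc : Continuous L) :
    oneSub L hL ∈ continuousAddAuts M :=
  ⟨continuous_id.sub hc, continuous_id.add hc⟩

theorem AddEquiv.arrowCongr_mem_continuousAddAuts {α G : Type*} [AddGroup G] [TopologicalSpace G]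
    (π : Equiv.Perm α) : AddEquiv.arrowCongr π (AddEquiv.refl G) ∈ continuousAddAuts (α → G) :=
  ⟨continuous_pi fun _ => continuous_apply _, continuous_pi fun _ => continuous_apply _⟩

/-- `K + Nat.pair n s` (`n < K`) is coordinate `n` of the `s`-th copy of `Iio K`. -/
def blockSwapFun (K s n : ℕ) : ℕ :=
  if n < K then K + Nat.pair n s
  else if (Nat.unpair (n - K)).2 = s ∧ (Nat.unpair (n - K)).1 < K then (Nat.unpair (n - K)).1
  else n

theorem blockSwapFun_of_lt {K n : ℕ} (s : ℕ) (hn : n < K) :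
    blockSwapFun K s n = K + Nat.pair n s :=
  if_pos hn

theorem blockSwapFun_add_pair (K s a b : ℕ) :
    blockSwapFun K s (K + Nat.pair a b) = if b = s ∧ a < K then a else K + Nat.pair a b := by
  simp [blockSwapFun]

theorem blockSwapFun_involutive (K s : ℕ) : Function.Involutive (blockSwapFun K s) := by
  intro n
  rcases lt_or_ge n K with hn | hn
  · simp [blockSwapFun_of_lt s hn, blockSwapFun_add_pair, hn]
  · obtain ⟨a, b, rfl⟩ : ∃ a b, n = K + Nat.pair a b :=
      ⟨(n - K).unpair.1, (n - K).unpair.2, by rw [Nat.pair_unpair]; omega⟩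
    rw [blockSwapFun_add_pair]
    split_ifs with h
    · rw [blockSwapFun_of_lt s h.2, h.1]
    · rw [blockSwapFun_add_pair, if_neg h]

def blockSwap (K s : ℕ) : Equiv.Perm ℕ := (blockSwapFun_involutive K s).toPerm

section Copies

variable {G : Type*} [AddCommGroup G]

def copyShear (K t : ℕ) : (ℕ → G) →+ (ℕ → G) where
  toFun x n := if n < K then x (K + Nat.pair n t) else 0
  map_zero' := by ext; simp
  map_add' x y := by ext n; simp only [Pi.add_apply]; split_ifs <;> simp

theorem copyShear_copyShear (K t : ℕ) (x : ℕ → G) : copyShear K t (copyShear K t x) = 0 := by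
  ext n
  simp [copyShear]

theorem continuous_copyShear [TopologicalSpace G] (K t : ℕ) :
    Continuous (copyShear K t : (ℕ → G) → ℕ → G) := by
  refine continuous_pi fun n => ?_
  simp only [copyShear, AddMonoidHom.coe_mk, ZeroHom.coe_mk]
  split_ifs
  exacts [continuous_apply _, continuous_const]

def copyDiff (K s t : ℕ) : AddAut (ℕ → G) :=
  AddAut.oneSub (copyShear K t) (copyShear_copyShear K t) +
    AddEquiv.arrowCongr (blockSwap K s) (AddEquiv.refl G)

theorem copyDiff_apply_of_lt {K s t n : ℕ} (hst : s ≠ t) (hn : n < K) (z : ℕ → G) :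
    copyDiff K s t z n = z (K + Nat.pair n s) - z (K + Nat.pair n t) := by
  simp [copyDiff, AddAut.oneSub_apply, copyShear, blockSwap, hn, blockSwapFun_of_lt,
    blockSwapFun_add_pair, hst.symm]

theorem copyDiff_mem_continuousAddAuts [TopologicalSpace G] [IsTopologicalAddGroup G]
    (K s t : ℕ) :
    copyDiff K s t ∈ continuousAddAuts (ℕ → G) :=
  add_mem (AddAut.oneSub_mem_continuousAddAuts _ (continuous_copyShear K t))
    (AddEquiv.arrowCongr_mem_continuousAddAuts _)

end Copies

theorem exists_countable_isAbsorbing_nat_pi (G : Type*) [AddCommGroup G] [TopologicalSpace G]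
    [IsTopologicalAddGroup G] [CompactSpace G] :
    ∃ H : AddSubgroup (AddAut (ℕ → G)),
      (H : Set (AddAut (ℕ → G))).Countable ∧ H ≤ continuousAddAuts (ℕ → G) ∧ H.IsAbsorbing := by
  refine ⟨AddSubgroup.closure (range fun p : ℕ × ℕ × ℕ => copyDiff p.1 p.2.1 p.2.2),
    (countable_range _).addSubgroupClosure,
    (AddSubgroup.closure_le _).2 (range_subset_iff.2 fun p => copyDiff_mem_continuousAddAuts _ _ _),
    AddSubgroup.isAbsorbing_iff.2 fun U hU z => ?_⟩
  obtain ⟨K, V, hV, hVU⟩ := exists_pi_Iio_subset_of_mem_nhds hU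
  have hW : (Iio K).pi (fun _ => V) ∈ 𝓝 (0 : ℕ → G) :=
    set_pi_mem_nhds (finite_Iio K) fun _ _ => hV
  obtain ⟨s, t, hst, hsmall⟩ :=
    exists_ne_sub_mem_of_compactSpace_s10 (fun s n => z (K + Nat.pair n s)) hW
  refine ⟨copyDiff K s t, AddSubgroup.subset_closure ⟨(K, s, t), rfl⟩, hVU fun n hn => ?_⟩
  rw [copyDiff_apply_of_lt hst hn]
  exact hsmall n hn

theorem stmt10 (ι : Type*) [Infinite ι] :
    ∃ H : AddSubgroup (AddAut (ι → AddCircle (1 : ℝ))),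
      (H : Set (AddAut (ι → AddCircle (1 : ℝ)))).Countable ∧
      (∀ h ∈ H, Continuous ⇑h ∧ Continuous ⇑h.symm) ∧
      ∀ U ∈ nhds (0 : ι → AddCircle (1 : ℝ)), (⋃ h ∈ H, ⇑h '' U) = Set.univ := by
  obtain ⟨e⟩ : Nonempty (ι ≃ ℕ × ι) := by
    rw [← Cardinal.eq]
    simp [Cardinal.mk_prod]
  let ψ := (ContinuousAddEquiv.piCurryOfEquiv e (AddCircle (1 : ℝ))).symm
  obtain ⟨H, hcount, hcont, habs⟩ := exists_countable_isAbsorbing_nat_pi (ι → AddCircle (1 : ℝ))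
  exact ⟨H.map (AddAut.congr ψ.toAddEquiv).toAddMonoidHom, hcount.image _,
    fun h hh => map_congr_continuousAddAuts_le ψ (AddSubgroup.map_mono hcont hh), habs.map_congr ψ⟩
end

section
/- An abelian topological group is duoseparable if and only if it is separable. -/
open Pointwise Set Topology TopologicalSpace

def Duoseparable (G : Type*) [Group G] [TopologicalSpace G] : Prop :=
  ∃ S : Set G, S.Countable ∧ ∀ U ∈ 𝓝 (1 : G), S * U * S = univ

section TopologicalGroup

variable {G : Type*} [Group G] [TopologicalSpace G] [IsTopologicalGroup G]

theorem dense_iff_nhds_one_mul_eq_univ {s : Set G} :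
    Dense s ↔ ∀ U ∈ 𝓝 (1 : G), U * s = univ := by
  constructor
  · intro hs U hU
    have hne : (interior U).Nonempty := ⟨1, mem_interior_iff_mem_nhds.mpr hU⟩
    refine eq_univ_of_univ_subset ?_
    calc univ = interior U * closure s := by rw [hs.closure_eq, mul_univ hne]
      _ = interior U * s := isOpen_interior.mul_closure s
      _ ⊆ U * s := mul_subset_mul_right interior_subset
  · intro hs x
    rw [mem_closure_iff_nhds_one]
    intro U hU
    obtain ⟨v, hv, y, hy, rfl⟩ : x ∈ U⁻¹ * s := hs _ (inv_mem_nhds_one G hU) ▸ mem_univ x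
    exact ⟨y, hy, by simpa using hv⟩

theorem duoseparable_of_separableSpace [SeparableSpace G] : Duoseparable G := by
  obtain ⟨D, hD, hdense⟩ := exists_countable_dense G
  refine ⟨insert 1 D, hD.insert 1, fun U hU => eq_univ_of_univ_subset ?_⟩
  calc univ = {1} * U * D := by
        rw [singleton_one, one_mul, dense_iff_nhds_one_mul_eq_univ.mp hdense U hU]
    _ ⊆ insert 1 D * U * insert 1 D :=
        mul_subset_mul (mul_subset_mul_right (singleton_subset_iff.mpr (mem_insert 1 D)))
          (subset_insert 1 D)

end TopologicalGroup

/-- In an abelian group `S * U * S = U * (S * S)`, so the countable set `S * S` is dense. -/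
theorem Duoseparable.separableSpace {G : Type*} [CommGroup G] [TopologicalSpace G]
    [IsTopologicalGroup G] (h : Duoseparable G) : SeparableSpace G := by
  obtain ⟨S, hS, hSUS⟩ := h
  refine ⟨⟨S * S, image2_mul (s := S) (t := S) ▸ hS.image2 hS _, ?_⟩⟩
  refine dense_iff_nhds_one_mul_eq_univ.mpr fun U hU => ?_
  rw [← mul_assoc, mul_comm U S, hSUS U hU]

theorem stmt14 (X : Type*) [CommGroup X] [TopologicalSpace X] [IsTopologicalGroup X] :
    (∃ S : Set X, S.Countable ∧ ∀ U ∈ nhds (1 : X), S * U * S = Set.univ) ↔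
      TopologicalSpace.SeparableSpace X :=
  ⟨Duoseparable.separableSpace, fun _ => duoseparable_of_separableSpace⟩
end

section
/- If a topological group X contains a separable closed normal subgroup H such that the quotient group X/H is precompact, then X is preseparable. -/
open Pointwise

/-!
Take a countable `S ⊆ H` dense in `H`. Given `U ∈ 𝓝 1`, pick a symmetric `V ∈ 𝓝 1` with
`V * V ⊆ U`. Density gives `H ⊆ S * V` and `H ⊆ V * S`, and precompactness of `X ⧸ H`, applied
to the image of `V`, gives a finite `F` with `F * V * H = X`; inverting, `H * V * F⁻¹ = X`.
Hence `X = H * V * F⁻¹ ⊆ S * U * F⁻¹` and `X = F * V * H ⊆ F * U * S`.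
-/

open Set Filter Topology

section

variable {X : Type*} [Group X] [TopologicalSpace X] [SeparatelyContinuousMul X]

theorem exists_finite_mul_mul_subgroup_eq_univ (H : Subgroup X) [H.Normal]
    (hprecomp : ∀ U ∈ 𝓝 (1 : X ⧸ H), ∃ F : Set (X ⧸ H), F.Finite ∧ F * U = univ)
    {V : Set X} (hV : V ∈ 𝓝 1) :
    ∃ F : Set X, F.Finite ∧ F * V * (H : Set X) = univ := by
  have hπV : ((↑) '' V : Set (X ⧸ H)) ∈ 𝓝 1 := by
    simpa using (QuotientGroup.isOpenMap_coe (N := H)).image_mem_nhds hV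
  obtain ⟨F', hF', hF'V⟩ := hprecomp _ hπV
  refine ⟨Quotient.out '' F', hF'.image _, ?_⟩
  have hπF : ((↑) '' (Quotient.out '' F') : Set (X ⧸ H)) = F' := by
    simp [image_image]
  rw [← QuotientGroup.preimage_image_mk_eq_mul, ← QuotientGroup.coe_mk', image_mul,
    QuotientGroup.coe_mk', hπF, hF'V, preimage_univ]

theorem exists_finite_mul_mul_subgroup_eq_univ_and_subgroup_mul_mul_eq_univ
    (H : Subgroup X) [H.Normal]
    (hprecomp : ∀ U ∈ 𝓝 (1 : X ⧸ H), ∃ F : Set (X ⧸ H), F.Finite ∧ F * U = univ)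
    {V : Set X} (hV : V ∈ 𝓝 1) (hVinv : V⁻¹ = V) :
    ∃ F : Set X, F.Finite ∧ F * V * (H : Set X) = univ ∧ (H : Set X) * V * F = univ := by
  obtain ⟨F, hF, hFVH⟩ := exists_finite_mul_mul_subgroup_eq_univ H hprecomp hV
  have hHVF : (H : Set X) * V * F⁻¹ = univ := by
    simpa [mul_inv_rev, hVinv, mul_assoc] using congrArg (·⁻¹) hFVH
  refine ⟨F ∪ F⁻¹, hF.union hF.inv, ?_, ?_⟩
  · exact eq_univ_of_univ_subset (hFVH ▸ by gcongr; exact subset_union_left)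
  · exact eq_univ_of_univ_subset (hHVF ▸ by gcongr; exact subset_union_right)

end

theorem stmt15_general (X : Type*) [Group X] [TopologicalSpace X] [IsTopologicalGroup X]
    (H : Subgroup X) [H.Normal]
    (hsep : TopologicalSpace.SeparableSpace H)
    (hprecomp : ∀ U ∈ nhds (1 : X ⧸ H), ∃ F : Set (X ⧸ H), F.Finite ∧ F * U = Set.univ) :
    ∃ S : Set X, S.Countable ∧ ∀ U ∈ nhds (1 : X),
      ∃ F : Set X, F.Finite ∧ S * U * F = Set.univ ∧ F * U * S = Set.univ := by
  obtain ⟨S, hS, hHS⟩ := TopologicalSpace.IsSeparable.of_subtype (H : Set X)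
  refine ⟨S, hS, fun U hU => ?_⟩
  obtain ⟨V, hV, -, hVinv, hVU⟩ := exists_closed_nhds_one_inv_eq_mul_subset hU
  have hVsymm : ∀ x ∈ V, x⁻¹ ∈ V := fun x hx => by rwa [← hVinv, Set.inv_mem_inv]
  obtain ⟨F, hF, hFVH, hHVF⟩ :=
    exists_finite_mul_mul_subgroup_eq_univ_and_subgroup_mul_mul_eq_univ H hprecomp hV hVinv
  have hHSV : (H : Set X) ⊆ S * V :=
    hHS.trans (closure_subset_mul_right_of_mem_nhds_one_of_inv S hV hVsymm)
  have hHVS : (H : Set X) ⊆ V * S :=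
    hHS.trans (closure_subset_mul_left_of_mem_nhds_one_of_inv S hV hVsymm)
  refine ⟨F, hF, eq_univ_of_univ_subset ?_, eq_univ_of_univ_subset ?_⟩
  · calc univ = (H : Set X) * V * F := hHVF.symm
      _ ⊆ S * V * V * F := by gcongr
      _ = S * (V * V) * F := by rw [mul_assoc S]
      _ ⊆ S * U * F := by gcongr
  · calc univ = F * V * (H : Set X) := hFVH.symm
      _ ⊆ F * V * (V * S) := by gcongr
      _ = F * (V * V) * S := by simp only [mul_assoc]
      _ ⊆ F * U * S := by gcongr

theorem stmt15 (X : Type*) [Group X] [TopologicalSpace X] [IsTopologicalGroup X]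
    (H : Subgroup X) [H.Normal] (hclosed : IsClosed (H : Set X))
    (hsep : TopologicalSpace.SeparableSpace H)
    (hprecomp : ∀ U ∈ nhds (1 : X ⧸ H), ∃ F : Set (X ⧸ H), F.Finite ∧ F * U = Set.univ) :
    ∃ S : Set X, S.Countable ∧ ∀ U ∈ nhds (1 : X),
      ∃ F : Set X, F.Finite ∧ S * U * F = Set.univ ∧ F * U * S = Set.univ :=
  stmt15_general X H hsep hprecomp
end

section
/- Let H be a nonseparable Banach space (viewed as an additive topological group), α : H → H the automorphism α(x) = x + x, and X = H ⋊_α ℤ the semidirect product with ℤ discrete. Then X is duoseparable but not narrow. -/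
theorem stmt17 (H : Type*) [NormedAddCommGroup H] [NormedSpace ℝ H] [CompleteSpace H]
    (hns : ¬ TopologicalSpace.SeparableSpace H)
    (mul : H × ℤ → H × ℤ → H × ℤ)
    (hmul : ∀ p q, mul p q = (p.1 + (2 : ℝ) ^ p.2 • q.1, p.2 + q.2)) :
    (∃ S : Set (H × ℤ), S.Countable ∧ ∀ U ∈ nhds ((0 : H), (0 : ℤ)),
        Set.image2 mul (Set.image2 mul S U) S = Set.univ) ∧
    ¬ (∀ U ∈ nhds ((0 : H), (0 : ℤ)), ∃ C : Set (H × ℤ), C.Countable ∧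
        Set.image2 mul C U = Set.univ) := by
  constructor
  · refine ⟨Set.range (fun n : ℤ => ((0 : H), n)), Set.countable_range _, ?_⟩
    intro U hU
    rw [mem_nhds_prod_iff] at hU
    obtain ⟨u, hu, v, hv, huv⟩ := hU
    obtain ⟨ε, hε, hball⟩ := Metric.mem_nhds_iff.mp hu
    have h0v : (0 : ℤ) ∈ v := mem_of_mem_nhds hv
    ext ⟨x, j⟩
    simp only [Set.mem_univ, iff_true]
    obtain ⟨n, hn⟩ := pow_unbounded_of_one_lt (‖x‖ / ε) (by norm_num : (1:ℝ) < 2)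
    have h2n : (0:ℝ) < 2 ^ (-(n:ℤ)) := zpow_pos (by norm_num) _
    set y : H := ((2:ℝ) ^ (-(n:ℤ))) • x with hy
    have hyU : (y, (0 : ℤ)) ∈ U := by
      apply huv
      refine ⟨hball ?_, h0v⟩
      simp only [Metric.mem_ball, dist_zero_right, hy, norm_smul, Real.norm_eq_abs,
        abs_of_pos h2n]
      have hx : ‖x‖ < 2 ^ n * ε := by
        rw [div_lt_iff₀ hε] at hn; linarith
      have h2 : (2:ℝ) ^ (-(n:ℤ)) = (2 ^ n)⁻¹ := by
        rw [zpow_neg, zpow_natCast]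
      rw [h2]
      have hp : (0:ℝ) < 2 ^ n := by positivity
      rw [inv_mul_lt_iff₀ hp]
      linarith
    refine Set.mem_image2.mpr ⟨mul ((0 : H), (n : ℤ)) (y, 0), ?_, ((0 : H), j - n), ⟨j - n, rfl⟩, ?_⟩
    · exact Set.mem_image2_of_mem ⟨n, rfl⟩ hyU
    · rw [hmul, hmul]
      simp only [smul_zero, add_zero, zero_add]
      refine Prod.ext ?_ (by ring)
      simp only [hy, smul_smul]
      rw [← zpow_add₀ (by norm_num : (2:ℝ) ≠ 0)]
      simp
  · intro hnarrow
    obtain ⟨C, hC, hCU⟩ := hnarrow (Metric.ball (0 : H) 1 ×ˢ ({0} : Set ℤ))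
      (prod_mem_nhds (Metric.ball_mem_nhds _ one_pos) (by simp))
    apply hns
    refine ⟨⟨Prod.fst '' C, hC.image _, ?_⟩⟩
    rw [Metric.dense_iff]
    intro x r hr
    obtain ⟨m, hm⟩ := pow_unbounded_of_one_lt (1 / r) (by norm_num : (1:ℝ) < 2)
    have hx : (x, -(m : ℤ)) ∈ Set.image2 mul C (Metric.ball (0 : H) 1 ×ˢ ({0} : Set ℤ)) := by
      rw [hCU]; trivial
    obtain ⟨⟨c, n⟩, hc, ⟨w, k⟩, hw, heq⟩ := hx
    rw [hmul] at heq
    have hk : k = 0 := hw.2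
    have hn : n = -(m : ℤ) := by
      have := congrArg Prod.snd heq
      simp [hk] at this; exact this
    have hx1 : c + (2:ℝ) ^ (-(m:ℤ)) • w = x := by
      have := congrArg Prod.fst heq
      simpa [hn] using this
    have hwlt : ‖w‖ < 1 := by simpa [Metric.mem_ball, dist_zero_right] using hw.1
    have h2m : (0:ℝ) < 2 ^ (-(m:ℤ)) := zpow_pos (by norm_num) _
    have hdist : dist x c < r := by
      rw [dist_eq_norm]
      have : x - c = (2:ℝ) ^ (-(m:ℤ)) • w := by rw [← hx1]; abel
      rw [this, norm_smul, Real.norm_eq_abs, abs_of_pos h2m]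
      have h2mr : (2:ℝ) ^ (-(m:ℤ)) < r := by
        have h2 : (2:ℝ) ^ (-(m:ℤ)) = (2 ^ m)⁻¹ := by rw [zpow_neg, zpow_natCast]
        rw [h2]
        rw [div_lt_iff₀ hr] at hm
        rw [inv_lt_iff_one_lt_mul₀ (by positivity)]
        nlinarith
      nlinarith
    exact ⟨c, Metric.mem_ball.mpr (by rwa [dist_comm]), ⟨(c, n), hc, rfl⟩⟩
end

section
/- If X is a narrow topological group and Y ⊆ X is a subgroup with the subspace topology, then Y is narrow. -/
open Pointwise Set

theorem Subgroup.exists_countable_mul_preimage_inv_mul_eq_univ {X : Type*} [Group X]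
    (Y : Subgroup X) {S W : Set X} (hS : S.Countable) (hSW : S * W = univ) :
    ∃ T : Set Y, T.Countable ∧ T * ((↑) ⁻¹' (W⁻¹ * W)) = univ := by
  -- `g s` is a point of `Y` in `s * W` whenever that translate meets `Y`.
  have hpick : ∀ s : X, ∃ t : Y, (∃ y : Y, s⁻¹ * y ∈ W) → s⁻¹ * t ∈ W := fun s =>
    (em _).elim (fun ⟨y, hy⟩ => ⟨y, fun _ => hy⟩) fun h => ⟨1, fun h' => (h h').elim⟩
  choose g hg using hpick
  refine ⟨g '' S, hS.image g, eq_univ_of_forall fun y => ?_⟩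
  obtain ⟨s, hs, w, hw, hsw⟩ : (y : X) ∈ S * W := hSW ▸ mem_univ _
  have hy : s⁻¹ * (y : X) ∈ W := by rwa [← hsw, inv_mul_cancel_left]
  refine ⟨g s, mem_image_of_mem g hs, (g s)⁻¹ * y, ?_, mul_inv_cancel_left _ _⟩
  have hgs := hg s ⟨y, hy⟩
  refine ⟨(s⁻¹ * g s)⁻¹, inv_mem_inv.mpr hgs, s⁻¹ * y, hy, ?_⟩
  simp only [Subgroup.coe_mul, Subgroup.coe_inv]
  group

theorem stmt18 (X : Type*) [Group X] [TopologicalSpace X] [IsTopologicalGroup X]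
    (hX : ∀ U ∈ nhds (1 : X), ∃ S : Set X, S.Countable ∧ S * U = Set.univ)
    (Y : Subgroup X) :
    ∀ U ∈ nhds (1 : Y), ∃ S : Set Y, S.Countable ∧ S * U = Set.univ := by
  intro U hU
  obtain ⟨V, hV, hVU⟩ := (mem_nhds_subtype (Y : Set X) 1 U).mp hU
  obtain ⟨W, hW, -, hWinv, hWV⟩ := exists_closed_nhds_one_inv_eq_mul_subset hV
  obtain ⟨S, hS, hSW⟩ := hX W hW
  obtain ⟨T, hT, hTW⟩ := Y.exists_countable_mul_preimage_inv_mul_eq_univ hS hSW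
  refine ⟨T, hT, eq_univ_of_univ_subset (hTW ▸ mul_subset_mul_left ?_)⟩
  exact (preimage_mono (hWinv.symm ▸ hWV)).trans hVU
end

section
/- The additive topological monoid X = {0} ∪ [1, ∞) ⊆ ℝ (with the subspace topology and addition) is separable but there is no countable set S ⊆ X such that S + U + S = X for every neighborhood U of 0 in X. -/
/-! Separability is inherited from ℝ. Since `0` is isolated in `X`, `U = {0}` is a neighborhood
of `0`, and then `S + U + S = S + S` is countable for countable `S`, whereas `X ⊇ [1, ∞)` is not. -/

def Xmonoid : Set ℝ := {0} ∪ Set.Ici 1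

def Xadd (a b : Xmonoid) : Xmonoid :=
  ⟨a.1 + b.1, by
    rcases a with ⟨x, hx | hx⟩ <;> rcases b with ⟨y, hy | hy⟩ <;>
      simp only [Set.mem_singleton_iff] at * <;>
      simp only [Xmonoid, Set.mem_union, Set.mem_singleton_iff, Set.mem_Ici] at *
    · left; simp [hx, hy]
    · right; simpa [hx] using hy
    · right; simpa [hy] using hx
    · right; linarith⟩

lemma Xmonoid.isOpen_singleton_zero : IsOpen ({⟨0, Or.inl rfl⟩} : Set Xmonoid) := by
  have h : ({⟨0, Or.inl rfl⟩} : Set Xmonoid) = Subtype.val ⁻¹' Set.Iio 1 := by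
    ext ⟨x, hx | hx⟩
    · obtain rfl : x = 0 := hx
      simp
    · have : (1 : ℝ) ≤ x := hx
      simp only [Set.mem_singleton_iff, Subtype.ext_iff, Set.mem_preimage, Set.mem_Iio]
      constructor <;> intro <;> linarith
  rw [h]
  exact isOpen_Iio.preimage continuous_subtype_val

lemma Xmonoid.not_countable_univ : ¬ (Set.univ : Set Xmonoid).Countable := by
  intro h
  have hIoo : Set.Ioo (1 : ℝ) 2 ⊆ Subtype.val '' (Set.univ : Set Xmonoid) := fun x hx =>
    ⟨⟨x, Or.inr hx.1.le⟩, Set.mem_univ _, rfl⟩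
  have : (Set.Ioo (1 : ℝ) 2).Countable := (h.image Subtype.val).mono hIoo
  exact absurd (Cardinal.Real.Ioo_countable_iff.mp this) (by norm_num)

theorem stmt19 :
    TopologicalSpace.SeparableSpace Xmonoid ∧
    ¬ ∃ S : Set Xmonoid, S.Countable ∧
        ∀ U ∈ nhds (⟨0, Or.inl rfl⟩ : Xmonoid),
          Set.image2 Xadd (Set.image2 Xadd S U) S = Set.univ := by
  refine ⟨inferInstance, ?_⟩
  rintro ⟨S, hS, hSUS⟩
  have hX := hSUS _ (Xmonoid.isOpen_singleton_zero.mem_nhds rfl)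
  exact Xmonoid.not_countable_univ (hX ▸ (hS.image2 (Set.countable_singleton _) _).image2 hS _)
end
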